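/- If h : [0,∞) → [0,∞) satisfies h'(t) ≤ -h(t)² + K² on [0,T] with K ≥ 1 and T ≥ 1, then sup_{t ∈ [T/2,T]} h(t) ≤ K·(1 + 2/(e^T - 1)), a bound independent of the initial value h(0) ≥ 0. -/

import Mathlib

/-!
For every `c > 1`, `g t = K + 2K / (c e^{2Kt} - 1)` solves `g' = -g² + K²`: it is
`K coth (K (t + s))` with `e^{2Ks} = c`. Choosing `c` close to `1` makes `g 0`
exceed `h 0`, so the comparison principle gives `h ≤ g`; and `g t` is bounded independently of `c`
because `c e^{2Kt} ≥ e^{2Kt} ≥ e^T` for `t ≥ T/2`.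
-/

open Set Real

theorem le_of_riccati_subsolution {h h' g : ℝ → ℝ} {K a b : ℝ}
    (hh : ∀ t ∈ Icc a b, HasDerivAt h (h' t) t)
    (hh' : ∀ t ∈ Icc a b, h' t ≤ -(h t) ^ 2 + K ^ 2)
    (hg : ∀ t ∈ Icc a b, HasDerivAt g (-(g t) ^ 2 + K ^ 2) t)
    (hg_nonneg : ∀ t ∈ Icc a b, 0 ≤ g t) (ha : h a ≤ g a) :
    ∀ t ∈ Icc a b, h t ≤ g t := by
  intro t ht
  refine le_of_forall_pos_le_add fun δ hδ => ?_
  -- `g + δ` is a strict supersolution, so the strict fencing theorem applies.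
  refine image_le_of_deriv_right_lt_deriv_boundary'
    (fun x hx => (hh x hx).continuousAt.continuousWithinAt)
    (fun x hx => (hh x (Ico_subset_Icc_self hx)).hasDerivWithinAt)
    (by linarith) (fun x hx => ((hg x hx).continuousAt.add_const δ).continuousWithinAt)
    (fun x hx => ((hg x (Ico_subset_Icc_self hx)).add_const δ).hasDerivWithinAt) ?_ ht
  intro x hx hhx
  have hx' := Ico_subset_Icc_self hx
  nlinarith [hh' x hx', hg_nonneg x hx']

noncomputable def riccatiSolution (K c t : ℝ) : ℝ :=
  K + 2 * K / (c * exp (2 * K * t) - 1)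

section riccatiSolution

variable {K c t : ℝ}

theorem one_lt_mul_exp (hc : 1 < c) (hK : 0 ≤ K) (ht : 0 ≤ t) : 1 < c * exp (2 * K * t) :=
  one_lt_mul_of_lt_of_le hc (one_le_exp (by positivity))

theorem riccatiSolution_nonneg (hc : 1 < c) (hK : 0 ≤ K) (ht : 0 ≤ t) :
    0 ≤ riccatiSolution K c t := by
  have := one_lt_mul_exp hc hK ht
  exact add_nonneg hK (div_nonneg (by positivity) (by linarith))

theorem hasDerivAt_riccatiSolution (hc : 1 < c) (hK : 0 ≤ K) (ht : 0 ≤ t) :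
    HasDerivAt (riccatiSolution K c) (-(riccatiSolution K c t) ^ 2 + K ^ 2) t := by
  have hden : c * exp (2 * K * t) - 1 ≠ 0 := by linarith [one_lt_mul_exp hc hK ht]
  have hE : HasDerivAt (fun s => c * exp (2 * K * s) - 1) (c * (exp (2 * K * t) * (2 * K))) t :=
    ((((hasDerivAt_id t).const_mul (2 * K)).exp).const_mul c).sub_const 1 |>.congr_deriv
      (by simp)
  refine (((hasDerivAt_const t (2 * K)).div hE hden).const_add K).congr_deriv ?_
  simp only [riccatiSolution]
  field_simp
  ring

theorem riccatiSolution_le (hK : 0 ≤ K) {x : ℝ} (hx : 0 < x) (hxt : exp x ≤ c * exp (2 * K * t)) :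
    riccatiSolution K c t ≤ K * (1 + 2 / (exp x - 1)) := by
  have hx1 : 0 < exp x - 1 := by linarith [one_lt_exp_iff.2 hx]
  calc riccatiSolution K c t ≤ K + 2 * K / (exp x - 1) := by
        unfold riccatiSolution
        gcongr
    _ = K * (1 + 2 / (exp x - 1)) := by ring

theorem exists_riccatiSolution_zero_ge (hK : 0 < K) (y : ℝ) :
    ∃ c, 1 < c ∧ y ≤ riccatiSolution K c 0 := by
  refine ⟨1 + 2 * K / (|y| + 1), lt_add_of_pos_right 1 (by positivity), ?_⟩
  have hK2 : 2 * K / (2 * K / (|y| + 1)) = |y| + 1 := by field_simp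
  simp only [riccatiSolution, mul_zero, exp_zero, mul_one, add_sub_cancel_left, hK2]
  linarith [le_abs_self y]

end riccatiSolution

theorem riccati_inequality_uniform_bound_general (h h' : ℝ → ℝ) (K T : ℝ) (hK : 1 ≤ K) (hT : 1 ≤ T)
    (hderiv : ∀ t ∈ Set.Icc (0 : ℝ) T, HasDerivAt h (h' t) t)
    (hineq : ∀ t ∈ Set.Icc (0 : ℝ) T, h' t ≤ -(h t) ^ 2 + K ^ 2) :
    ∀ t ∈ Set.Icc (T / 2) T, h t ≤ K * (1 + 2 / (Real.exp T - 1)) := by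
  intro t ht
  have hK0 : 0 ≤ K := by linarith
  obtain ⟨c, hc, hc0⟩ := exists_riccatiSolution_zero_ge (K := K) (by linarith) (h 0)
  have hcomp := le_of_riccati_subsolution hderiv hineq
    (fun s hs => hasDerivAt_riccatiSolution hc hK0 hs.1)
    (fun s hs => riccatiSolution_nonneg hc hK0 hs.1) hc0 t ⟨by linarith [ht.1], ht.2⟩
  refine hcomp.trans (riccatiSolution_le hK0 (by linarith) ?_)
  calc exp T ≤ exp (2 * K * t) := exp_le_exp.2 (by nlinarith [ht.1])
    _ ≤ c * exp (2 * K * t) := le_mul_of_one_le_left (exp_pos _).le hc.le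

/-- If `h : [0,∞) → [0,∞)` satisfies the Riccati differential inequality
`h' ≤ -h² + K²` on `[0,T]` with `K ≥ 1` and `T ≥ 1`, then
`sup_{t ∈ [T/2,T]} h t ≤ K·(1 + 2/(e^T - 1))`, uniformly in `h 0 ≥ 0`. -/
theorem riccati_inequality_uniform_bound (h h' : ℝ → ℝ) (K T : ℝ) (hK : 1 ≤ K) (hT : 1 ≤ T)
    (hnn : ∀ t : ℝ, 0 ≤ t → 0 ≤ h t)
    (hderiv : ∀ t ∈ Set.Icc (0 : ℝ) T, HasDerivAt h (h' t) t)
    (hineq : ∀ t ∈ Set.Icc (0 : ℝ) T, h' t ≤ -(h t) ^ 2 + K ^ 2) :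
    ∀ t ∈ Set.Icc (T / 2) T, h t ≤ K * (1 + 2 / (Real.exp T - 1)) :=
  riccati_inequality_uniform_bound_general h h' K T hK hT hderiv hineq
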